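/- arXiv:2209.07955 — 2 statements merged into one kernel-verified Lean document; each statement's English description precedes it below -/
import Mathlib

section
/- If a ≥ b ≥ c ≥ d are real numbers with a + b + c + d = 0 and ad = bc < 0, then a = b and c = d. -/
/-! Eliminating `a` with the zero sum turns `a * d = b * c` into `(b + d) * (c + d) = 0`. Since
`c + d < 0`, this forces `b = -d` and then `a = -c`; the ordering `a ≥ b` becomes `d ≥ c`, so
`c = d` and `a = b`. -/

theorem add_mul_add_eq_zero_of_add_eq_zero_of_mul_eq_mul {R : Type*} [CommRing R] {a b c d : R}
    (hsum : a + b + c + d = 0) (hprod : a * d = b * c) : (b + d) * (c + d) = 0 := by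
  linear_combination d * hsum - hprod

theorem stmt2 (a b c d : ℝ) (hab : a ≥ b) (hbc : b ≥ c) (hcd : c ≥ d)
    (hsum : a + b + c + d = 0) (hprod : a * d = b * c) (hneg : b * c < 0) :
    a = b ∧ c = d := by
  have hc : c < 0 := by
    by_contra! hc
    exact hneg.not_ge (mul_nonneg (hc.trans hbc) hc)
  rcases mul_eq_zero.1 (add_mul_add_eq_zero_of_add_eq_zero_of_mul_eq_mul hsum hprod) with hbd | hcd_zero
  · constructor <;> linarith
  · linarith
end

section
/- Let λ₁ > λ₂ > 0 be real numbers. If x, y ≥ 0 satisfy the linear system ((3λ₁⁴λ₂² + 2λ₁²λ₂⁴ - 3λ₂⁶ - 6λ₁⁶)/(λ₁²λ₂⁴))·x + ((3λ₁²λ₂⁴ + 2λ₁⁴λ₂² - 3λ₁⁶ - 6λ₂⁶)/λ₂⁶)·y = (7/2)(λ₁² + λ₂²) + 3(λ₁² - λ₂²)² - 4(λ₁² + λ₂²)², together with the analogous equation ((2λ₁⁸ + λ₂⁸ + 2λ₁⁶λ₂² - λ₁⁴λ₂⁴)/(λ₁²λ₂⁴))·x + ((2λ₂⁸ + λ₁⁸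 + 2λ₁²λ₂⁶ - λ₁⁴λ₂⁴)/λ₂⁶)·y = (2/5)(λ₁⁶ + λ₂⁶) + (22/5)(λ₁⁴λ₂² + λ₁²λ₂⁴) - (13/10)(λ₁⁴ + λ₂⁴) - 2λ₁²λ₂², and additionally ((3λ₁⁴ + 2λ₁²λ₂² - λ₂⁴)/λ₂²)·x + (λ₁²(3λ₂⁴ + 2λ₁²λ₂² - λ₁⁴)/λ₂⁴)·y = -(9/5)(λ₁⁶ + λ₂⁶ + λ₁⁴λ₂² + λ₁²λ₂⁴) - (2/5)(λ₁⁴ + λ₂⁴) + λ₁²λ₂², then (λ₁² - λ₂²)³(λ₁² + λ₂²)³(λ₁⁴ - λ₁²λ₂² + λ₂⁴) = 0, which is impossible; hence no such x, y exist. -/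
/-!
Three linear equations in the two unknowns `x, y` can only be solvable if their augmented
`3 × 3` determinant vanishes. For this system that determinant is
`-10 (l₁² - l₂²)³ (l₁² + l₂²)³ (l₁⁴ - l₁² l₂² + l₂⁴) / l₂⁸`, which is nonzero when `l₁ > l₂ > 0`.
-/

theorem Matrix.det_fin_three_eq_zero_of_solvable {R : Type*} [CommRing R]
    {M : Matrix (Fin 3) (Fin 3) R} {x y : R} (h : ∀ i, M i 0 * x + M i 1 * y = M i 2) :
    M.det = 0 := by
  rw [Matrix.det_fin_three, ← h 0, ← h 1, ← h 2]
  ring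

/-- Row `i` holds `[a, b, c]` for the `i`-th equation `a * x + b * y = c` of the system. -/
noncomputable def caseIIMatrix (l₁ l₂ : ℝ) : Matrix (Fin 3) (Fin 3) ℝ :=
  !![(3*l₁^4*l₂^2 + 2*l₁^2*l₂^4 - 3*l₂^6 - 6*l₁^6) / (l₁^2*l₂^4),
      (3*l₁^2*l₂^4 + 2*l₁^4*l₂^2 - 3*l₁^6 - 6*l₂^6) / l₂^6,
      (7/2)*(l₁^2 + l₂^2) + 3*(l₁^2 - l₂^2)^2 - 4*(l₁^2 + l₂^2)^2;
    (2*l₁^8 + l₂^8 + 2*l₁^6*l₂^2 - l₁^4*l₂^4) / (l₁^2*l₂^4),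
      (2*l₂^8 + l₁^8 + 2*l₁^2*l₂^6 - l₁^4*l₂^4) / l₂^6,
      (2/5)*(l₁^6 + l₂^6) + (22/5)*(l₁^4*l₂^2 + l₁^2*l₂^4) - (13/10)*(l₁^4 + l₂^4) - 2*l₁^2*l₂^2;
    (3*l₁^4 + 2*l₁^2*l₂^2 - l₂^4) / l₂^2,
      l₁^2*(3*l₂^4 + 2*l₁^2*l₂^2 - l₁^4) / l₂^4,
      -(9/5)*(l₁^6 + l₂^6 + l₁^4*l₂^2 + l₁^2*l₂^4) - (2/5)*(l₁^4 + l₂^4) + l₁^2*l₂^2]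

theorem det_caseIIMatrix {l₁ l₂ : ℝ} (h₁ : l₁ ≠ 0) (h₂ : l₂ ≠ 0) :
    (caseIIMatrix l₁ l₂).det =
      -(10 * (l₁^2 - l₂^2)^3 * (l₁^2 + l₂^2)^3 * (l₁^4 - l₁^2*l₂^2 + l₂^4)) / l₂^8 := by
  simp only [caseIIMatrix, Matrix.det_fin_three, Matrix.of_apply, Matrix.cons_val',
    Matrix.cons_val_zero, Matrix.cons_val_fin_one, Matrix.cons_val_one, Matrix.cons_val]
  field_simp
  ring

theorem det_caseIIMatrix_ne_zero {l₁ l₂ : ℝ} (h12 : l₂ < l₁) (h2 : 0 < l₂) :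
    (caseIIMatrix l₁ l₂).det ≠ 0 := by
  have h1 : 0 < l₁ := h2.trans h12
  have hdiff : 0 < l₁^2 - l₂^2 := by nlinarith
  have hquartic : 0 < l₁^4 - l₁^2*l₂^2 + l₂^4 := by
    nlinarith [sq_nonneg (l₁^2 - l₂^2), mul_pos (mul_pos h1 h1) (mul_pos h2 h2)]
  rw [det_caseIIMatrix h1.ne' h2.ne', neg_div, neg_ne_zero]
  positivity

theorem stmt6 (l₁ l₂ : ℝ) (h12 : l₁ > l₂) (h2 : l₂ > 0) :
    ¬ ∃ x y : ℝ, 0 ≤ x ∧ 0 ≤ y ∧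
      ((3*l₁^4*l₂^2 + 2*l₁^2*l₂^4 - 3*l₂^6 - 6*l₁^6) / (l₁^2*l₂^4)) * x +
        ((3*l₁^2*l₂^4 + 2*l₁^4*l₂^2 - 3*l₁^6 - 6*l₂^6) / l₂^6) * y =
        (7/2)*(l₁^2 + l₂^2) + 3*(l₁^2 - l₂^2)^2 - 4*(l₁^2 + l₂^2)^2 ∧
      ((2*l₁^8 + l₂^8 + 2*l₁^6*l₂^2 - l₁^4*l₂^4) / (l₁^2*l₂^4)) * x +
        ((2*l₂^8 + l₁^8 + 2*l₁^2*l₂^6 - l₁^4*l₂^4) / l₂^6) * y =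
        (2/5)*(l₁^6 + l₂^6) + (22/5)*(l₁^4*l₂^2 + l₁^2*l₂^4) - (13/10)*(l₁^4 + l₂^4) - 2*l₁^2*l₂^2 ∧
      ((3*l₁^4 + 2*l₁^2*l₂^2 - l₂^4) / l₂^2) * x +
        (l₁^2*(3*l₂^4 + 2*l₁^2*l₂^2 - l₁^4) / l₂^4) * y =
        -(9/5)*(l₁^6 + l₂^6 + l₁^4*l₂^2 + l₁^2*l₂^4) - (2/5)*(l₁^4 + l₂^4) + l₁^2*l₂^2 := by
  rintro ⟨x, y, -, -, e₁, e₂, e₃⟩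
  refine det_caseIIMatrix_ne_zero h12 h2 <|
    Matrix.det_fin_three_eq_zero_of_solvable (x := x) (y := y) fun i => ?_
  fin_cases i
  exacts [e₁, e₂, e₃]
end
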